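/- Let u be a word of length n, t > 0, and q a queue such that q(u) has at least one letter equal to t, is weakly decreasing up to level t, and has exactly |q| letters at most t. Then for each h ∈ {1,...,t−1}: {p : q(u)_p = h} ⪰ {p : u_p = h} ≫ {p : q(u)_p = h+1}, where A ⪰ B is componentwise domination of decreasing listings and A ≫ B means every element of A exceeds every element of B. -/

import Mathlib

open scoped BigOperators Classical

namespace MLQ

/-- Words of length `n` over the positive integers (letters are natural numbers,
with `0` unused). Sites are elements of `Fin n`, thought of cyclically. -/
abbrev Word (n : ℕ) := Fin n → ℕ

variable {n : ℕ}

section Cyclic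

variable [NeZero n]

/-- the site `s` steps (cyclically) to the right of `i` -/
def shiftR (i : Fin n) (s : ℕ) : Fin n :=
  ⟨(i.val + s) % n, Nat.mod_lt _ (Nat.pos_of_ne_zero (NeZero.ne n))⟩

/-- the site `s` steps (cyclically) to the left of `i` -/
def shiftL (i : Fin n) (s : ℕ) : Fin n :=
  ⟨(i.val + n - s % n) % n, Nat.mod_lt _ (Nat.pos_of_ne_zero (NeZero.ne n))⟩

/-- number of steps to go (cyclically) right from `i` to `j` -/
def cdistR (i j : Fin n) : ℕ := (j.val + n - i.val) % n

/-- number of steps to go (cyclically) left from `i` to `j` -/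
def cdistL (i j : Fin n) : ℕ := (i.val + n - j.val) % n

/-- first site of `s` weakly to the right (cyclically) of `i` -/
noncomputable def firstRight (i : Fin n) (s : Finset (Fin n)) (h : s.Nonempty) : Fin n :=
  shiftR i ((s.image (cdistR i)).min' (h.image _))

/-- first site of `s` weakly to the left (cyclically) of `i` -/
noncomputable def firstLeft (i : Fin n) (s : Finset (Fin n)) (h : s.Nonempty) : Fin n :=
  shiftL i ((s.image (cdistL i)).min' (h.image _))

/-- One step of Phase II of the queue algorithm: the state consists of the set of
still-unset sites of the queue together with the partial output word; processing
the letter at site `σ p`, it is placed (unchanged) on the first unset queue site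
weakly to the right of `σ p`. -/
noncomputable def step2 (u : Word n) (σ : Equiv.Perm (Fin n))
    (st : Finset (Fin n) × Word n) (p : Fin n) : Finset (Fin n) × Word n :=
  if h : st.1.Nonempty then
    let j := firstRight (σ p) st.1 h
    (st.1.erase j, Function.update st.2 j (u (σ p)))
  else st

/-- One step of Phase I of the queue algorithm: processing the letter at site `σ p`,
the letter `u (σ p) + 1` is placed on the first unset non-queue site weakly to the
left of `σ p`. -/
noncomputable def step1 (u : Word n) (σ : Equiv.Perm (Fin n))
    (st : Finset (Fin n) × Word n) (p : Fin n) : Finset (Fin n) × Word n :=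
  if h : st.1.Nonempty then
    let j := firstLeft (σ p) st.1 h
    (st.1.erase j, Function.update st.2 j (u (σ p) + 1))
  else st

/-- The two-phase queue algorithm computing `q(u)`, using the ordering permutation `σ`
(so the letters are processed in the order `u (σ 0), u (σ 1), …`): Phase II processes
the `|q|` smallest letters in increasing order, Phase I processes the remaining
letters in decreasing order. -/
noncomputable def queueActWith (q : Finset (Fin n)) (σ : Equiv.Perm (Fin n))
    (u : Word n) : Word n :=
  let s2 := ((List.finRange n).take q.card).foldl (step2 u σ) (q, fun _ => 0)
  let s1 := (((List.finRange n).drop q.card).reverse).foldl (step1 u σ) (qᶜ, s2.2)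
  s1.2

/-- `σ` is a valid ordering permutation for the word `u`. -/
def IsSorting (u : Word n) (σ : Equiv.Perm (Fin n)) : Prop := Monotone (u ∘ σ)

/-- The action `q(u)` of a queue `q` on a word `u`, using the canonical sorting
permutation. -/
noncomputable def act (q : Finset (Fin n)) (u : Word n) : Word n :=
  queueActWith q (Tuple.sort u) u

/-- The action of a tuple of queues `(q_1, …, q_k)` on a word (first `q_1`, then `q_2`, …). -/
noncomputable def mlqAct {k : ℕ} (qs : Fin k → Finset (Fin n)) (u : Word n) : Word n :=
  (List.ofFn qs).foldl (fun w q => act q w) u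

end Cyclic

/-- the type of a word: `typeOf u i` is the number of occurrences of the letter `i`. -/
def typeOf (u : Word n) : ℕ → ℕ := fun i => (Finset.univ.filter (fun p => u p = i)).card

/-- partial sums `p_i(m) = m_1 + ⋯ + m_i` of a type -/
def psum (m : ℕ → ℕ) (i : ℕ) : ℕ := ∑ j ∈ Finset.Icc 1 i, m j

/-- number of classes of a type: the largest `i` with `m i ≠ 0` -/
noncomputable def classes (m : ℕ → ℕ) : ℕ := sSup {i | m i ≠ 0}

/-- a packed word: all classes `1, …, ℓ` occur, where `ℓ` is the number of classes -/
def PackedWord (u : Word n) : Prop :=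
  (∀ p, 1 ≤ u p) ∧ ∀ j, 1 ≤ j → j ≤ classes (typeOf u) → typeOf u j ≠ 0

/-- merging classes `i` and `i+1` in a word: all letters `> i` are decremented -/
def mergeWord (i : ℕ) (u : Word n) : Word n := fun p => if i < u p then u p - 1 else u p

/-- merging classes `i` and `i+1` in a type -/
def mergeType (i : ℕ) (m : ℕ → ℕ) : ℕ → ℕ := fun j =>
  if j < i then m j else if j = i then m i + m (i + 1) else m (j + 1)

/-- `∨^(k)`: decrement all but the `k` smallest letters of a word (meaningful when
`k` is a partial sum of the type of the word). -/
def vee (k : ℕ) (u : Word n) : Word n := fun p =>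
  if (Finset.univ.filter (fun q => u q ≤ u p)).card ≤ k then u p else u p - 1

/-- iterated merge `∨_T` (the merges `∨_t` are applied for `t ∈ T` in decreasing order) -/
def mergeWordT (T : Finset ℕ) (u : Word n) : Word n :=
  (T.sort (· ≤ ·)).foldr mergeWord u

/-- iterated merge `∨_T` on types -/
def mergeTypeT (T : Finset ℕ) (m : ℕ → ℕ) : ℕ → ℕ :=
  (T.sort (· ≤ ·)).foldr mergeType m

/-- the weight of a queue, `∏_{j ∈ q} x_j` -/
noncomputable def qwt (q : Finset (Fin n)) : MvPolynomial (Fin n) ℤ :=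
  ∏ j ∈ q, MvPolynomial.X j

/-- the `σ`-twisted spectral weight `⟨u⟩_σ` of a word `u`, with respect to a type `m`
with `k + 1` classes: the sum of the weights of all `σ`-twisted multiline queues
`(q_1, …, q_k)` of type `m` (i.e. `|q_i| = p_{σ(i)}(m)`) with `u = q(1^n)`. -/
noncomputable def swt [NeZero n] (k : ℕ) (m : ℕ → ℕ) (σ : Equiv.Perm (Fin k))
    (u : Word n) : MvPolynomial (Fin n) ℤ :=
  ∑ qs ∈ Finset.univ.filter (fun qs : Fin k → Finset (Fin n) =>
      (∀ i, (qs i).card = psum m ((σ i : ℕ) + 1)) ∧ mlqAct qs (fun _ => 1) = u),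
    ∏ i, qwt (qs i)

/-- the (ordinary) spectral weight `⟨u⟩` of a packed word -/
noncomputable def spec [NeZero n] (u : Word n) : MvPolynomial (Fin n) ℤ :=
  swt (classes (typeOf u) - 1) (typeOf u) (Equiv.refl _) u

/-- the elementary symmetric polynomial `e_k(x_1, …, x_n)` -/
noncomputable def esym (n k : ℕ) : MvPolynomial (Fin n) ℤ :=
  ∑ t ∈ Finset.powersetCard k (Finset.univ : Finset (Fin n)), ∏ j ∈ t, MvPolynomial.X j

/-- the Gale order `A ⪰ B`: same cardinality, and the `k`-th largest element of `A`
is at least the `k`-th largest element of `B`, for every `k` -/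
def Dom (A B : Finset ℕ) : Prop :=
  A.card = B.card ∧ ∀ k < A.card,
    (B.sort (· ≤ ·)).reverse.getD k 0 ≤ (A.sort (· ≤ ·)).reverse.getD k 0

/-- `A ≫ B`: every element of `A` exceeds every element of `B` -/
def Gg (A B : Finset ℕ) : Prop := ∀ a ∈ A, ∀ b ∈ B, b < a

/-- a word is weakly decreasing up to level `t`: any two sites `p < q` with
`u q ≤ t` satisfy `u p ≥ u q` -/
def WDUpTo (t : ℕ) (u : Word n) : Prop :=
  ∀ p q : Fin n, p < q → u q ≤ t → u q ≤ u p

section Dual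

variable [NeZero n]

/-- the cyclic interval `{i, i+1, …, i+t}` -/
def cycInterval (i : Fin n) (t : ℕ) : Finset (Fin n) :=
  (Finset.range (t + 1)).image (shiftR i)

/-- the cyclic interval starting at `i` of length `t` is balanced for the
configuration `(q₁, q₂)` -/
def BalancedInterval (q1 q2 : Finset (Fin n)) (i : Fin n) (t : ℕ) : Prop :=
  (cycInterval i t ∩ q1).card = (cycInterval i t ∩ q2).card ∧
  ∀ l ≤ t, (cycInterval i l ∩ q2).card ≤ (cycInterval i l ∩ q1).card

/-- a site is balanced if it lies in some balanced interval; equivalently, its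
parenthesis (if any) is matched in the cyclic parenthesis-matching of the
configuration -/
def BalancedSite (q1 q2 : Finset (Fin n)) (j : Fin n) : Prop :=
  ∃ i t, t < n ∧ BalancedInterval q1 q2 i t ∧ j ∈ cycInterval i t

/-- the dual configuration: balanced sites keep their memberships, unbalanced
sites swap their memberships between the two queues -/
noncomputable def dualPair (q1 q2 : Finset (Fin n)) : Finset (Fin n) × Finset (Fin n) :=
  (Finset.univ.filter (fun j => if BalancedSite q1 q2 j then j ∈ q1 else j ∈ q2),
   Finset.univ.filter (fun j => if BalancedSite q1 q2 j then j ∈ q2 else j ∈ q1))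

/-- the operator `s_i` on tuples of queues, replacing the (0-indexed) adjacent pair
`(q_i, q_{i+1})` by its dual configuration -/
noncomputable def sOp {k : ℕ} (i : ℕ) (qs : Fin k → Finset (Fin n)) :
    Fin k → Finset (Fin n) := fun j =>
  if h : i + 1 < k then
    (if j.val = i then (dualPair (qs ⟨i, by omega⟩) (qs ⟨i + 1, h⟩)).1
     else if j.val = i + 1 then (dualPair (qs ⟨i, by omega⟩) (qs ⟨i + 1, h⟩)).2
     else qs j)
  else qs j

end Dual


/-- the set of sites (as natural numbers) where the word `u` has the letter `h` -/
def level {n : ℕ} (u : Word n) (h : ℕ) : Finset ℕ :=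
  (Finset.univ.filter (fun p => u p = h)).image (fun p : Fin n => (p : ℕ))

/-! Under the hypotheses the letters `≤ t` of `q(u)` sit exactly on `q`: Phase II carries the
`|q|` smallest letters of `u`, all `≤ t`, and Phase I writes letters `> t`. The leftmost queue site
receives `t`, so it is still free while a letter `h < t` is being placed; the first free queue site
weakly right of that letter is therefore reached without wrapping around. This gives a bijection
`{u = h} → {q(u) = h}` moving every site weakly to the right, whence `⪰`. If `q(u)_j = h + 1` with
`j ≥ p` and `u_p = h`, then `j` is still free when the letter at `p` is placed, so that letter
lands in `[p, j)`, contradicting that `q(u)` is weakly decreasing up to level `t`. -/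

theorem card_filter_orderEmbOfFin_le {α : Type*} [LinearOrder α] {A : Finset α} {N : ℕ}
    (hA : A.card = N) (i : Fin N) :
    (A.filter (A.orderEmbOfFin hA i ≤ ·)).card = N - i := by
  set e := A.orderEmbOfFin hA
  rw [show A = Finset.univ.image e from (A.image_orderEmbOfFin_univ hA).symm,
    Finset.filter_image, Finset.card_image_of_injective _ e.injective]
  simp only [OrderEmbedding.le_iff_le]
  rw [Finset.filter_le_eq_Ici, Fin.card_Ici]

theorem sort_reverse_getD_eq_orderEmbOfFin (A : Finset ℕ) {k : ℕ} (hk : k < A.card) :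
    (A.sort (· ≤ ·)).reverse.getD k 0 = A.orderEmbOfFin rfl ⟨A.card - 1 - k, by omega⟩ := by
  rw [Finset.orderEmbOfFin_apply, List.getD_eq_getElem _ _ (by simpa using hk),
    List.getElem_reverse]
  simp only [Finset.length_sort]
  rfl

theorem dom_of_card_filter_le {A B : Finset ℕ} (hcard : A.card = B.card)
    (hcount : ∀ m, (B.filter (m ≤ ·)).card ≤ (A.filter (m ≤ ·)).card) : Dom A B := by
  refine ⟨hcard, fun k hk => ?_⟩
  have hkB : k < B.card := hcard ▸ hk
  rw [sort_reverse_getD_eq_orderEmbOfFin A hk, sort_reverse_getD_eq_orderEmbOfFin B hkB]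
  set a := A.orderEmbOfFin rfl ⟨A.card - 1 - k, by omega⟩
  set b := B.orderEmbOfFin rfl ⟨B.card - 1 - k, by omega⟩
  have hA : (A.filter (a ≤ ·)).card = k + 1 := by
    rw [card_filter_orderEmbOfFin_le]
    dsimp only
    omega
  have hB : (B.filter (b ≤ ·)).card = k + 1 := by
    rw [card_filter_orderEmbOfFin_le]
    dsimp only
    omega
  by_contra! hab
  have hsub : A.filter (b ≤ ·) ⊆ (A.filter (a ≤ ·)).erase a := fun x hx => by
    obtain ⟨hx, hbx⟩ := Finset.mem_filter.1 hx
    exact Finset.mem_erase.2 ⟨by omega, Finset.mem_filter.2 ⟨hx, by omega⟩⟩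
  have := (hcount b).trans (Finset.card_le_card hsub)
  rw [hB, Finset.card_erase_of_mem
    (Finset.mem_filter.2 ⟨Finset.orderEmbOfFin_mem _ _ _, le_rfl⟩), hA] at this
  omega

section Placement

variable {α ι β : Type*} [DecidableEq α]

/-- The shape shared by both phases of the queue algorithm: the state is the set of free sites
together with the word written so far, and step `a` writes `val a` on some free site. -/
structure IsPlacement (f : Finset α × (α → β) → ι → Finset α × (α → β)) (val : ι → β) :
    Prop where
  exists_eq_of_nonempty : ∀ st a, st.1.Nonempty →
    ∃ j ∈ st.1, f st a = (st.1.erase j, Function.update st.2 j (val a))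
  eq_of_not_nonempty : ∀ st a, ¬ st.1.Nonempty → f st a = st

namespace IsPlacement

variable {f : Finset α × (α → β) → ι → Finset α × (α → β)} {val : ι → β}

theorem fst_subset (hf : IsPlacement f val) (st : Finset α × (α → β)) (a : ι) :
    (f st a).1 ⊆ st.1 := by
  by_cases hne : st.1.Nonempty
  · obtain ⟨j, -, hj⟩ := hf.exists_eq_of_nonempty st a hne
    rw [hj]
    exact Finset.erase_subset _ _
  · rw [hf.eq_of_not_nonempty st a hne]

theorem snd_apply_of_notMem (hf : IsPlacement f val) (st : Finset α × (α → β)) (a : ι)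
    {j : α} (hj : j ∉ st.1) : (f st a).2 j = st.2 j := by
  by_cases hne : st.1.Nonempty
  · obtain ⟨i, hi, hfi⟩ := hf.exists_eq_of_nonempty st a hne
    rw [hfi]
    exact Function.update_of_ne (by rintro rfl; exact hj hi) _ _
  · rw [hf.eq_of_not_nonempty st a hne]

theorem foldl_fst_subset (hf : IsPlacement f val) (l : List ι) (st : Finset α × (α → β)) :
    (l.foldl f st).1 ⊆ st.1 := by
  induction l generalizing st with
  | nil => exact subset_rfl
  | cons a l ih => exact (ih (f st a)).trans (hf.fst_subset st a)

theorem foldl_snd_apply_of_notMem (hf : IsPlacement f val) (l : List ι)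
    (st : Finset α × (α → β)) {j : α} (hj : j ∉ st.1) : (l.foldl f st).2 j = st.2 j := by
  induction l generalizing st with
  | nil => rfl
  | cons a l ih =>
    rw [List.foldl_cons, ih _ fun h => hj (hf.fst_subset st a h),
      hf.snd_apply_of_notMem st a hj]

theorem card_foldl_fst (hf : IsPlacement f val) (l : List ι) (st : Finset α × (α → β))
    (hl : l.length ≤ st.1.card) : (l.foldl f st).1.card = st.1.card - l.length := by
  induction l generalizing st with
  | nil => rfl
  | cons a l ih =>
    obtain ⟨j, hj, hfj⟩ := hf.exists_eq_of_nonempty st a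
      (Finset.card_pos.1 (by simp only [List.length_cons] at hl; omega))
    have hcard : (f st a).1.card = st.1.card - 1 := by rw [hfj, Finset.card_erase_of_mem hj]
    simp only [List.length_cons] at hl ⊢
    rw [List.foldl_cons, ih _ (by omega), hcard]
    omega

theorem exists_foldl_snd_apply_eq (hf : IsPlacement f val) (l : List ι)
    (st : Finset α × (α → β)) {j : α} (hj : j ∈ st.1) (hj' : j ∉ (l.foldl f st).1) :
    ∃ a ∈ l, (l.foldl f st).2 j = val a := by
  induction l generalizing st with
  | nil => exact absurd hj hj'
  | cons a l ih =>
    rw [List.foldl_cons] at hj' ⊢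
    by_cases hja : j ∈ (f st a).1
    · obtain ⟨b, hb, hval⟩ := ih _ hja hj'
      exact ⟨b, List.mem_cons_of_mem a hb, hval⟩
    · obtain ⟨i, -, hfi⟩ := hf.exists_eq_of_nonempty st a ⟨j, hj⟩
      have hji : j = i := by
        by_contra hne
        exact hja (by rw [hfi]; exact Finset.mem_erase.2 ⟨hne, hj⟩)
      refine ⟨a, List.mem_cons_self, ?_⟩
      rw [hf.foldl_snd_apply_of_notMem l _ hja, hfi, hji]
      exact Function.update_self _ _ _

end IsPlacement

end Placement

section Cyclic

theorem cdistR_of_le {i j : Fin n} (h : i ≤ j) : cdistR i j = j.val - i.val := by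
  have hj := j.isLt
  rw [cdistR, show j.val + n - i.val = j.val - i.val + n by omega, Nat.add_mod_right,
    Nat.mod_eq_of_lt (by omega)]

theorem cdistR_of_lt {i j : Fin n} (h : j < i) : cdistR i j = j.val + n - i.val :=
  Nat.mod_eq_of_lt (by have := i.isLt; omega)

variable [NeZero n]

theorem shiftR_cdistR (i j : Fin n) : shiftR i (cdistR i j) = j := by
  apply Fin.ext
  simp only [shiftR, cdistR, Nat.add_mod_mod]
  rw [show i.val + (j.val + n - i.val) = j.val + n by omega, Nat.add_mod_right,
    Nat.mod_eq_of_lt j.isLt]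

theorem shiftL_cdistL (i j : Fin n) : shiftL i (cdistL i j) = j := by
  have hi := i.isLt
  have hj := j.isLt
  apply Fin.ext
  simp only [shiftL, cdistL, Nat.mod_mod]
  rcases le_or_gt j.val i.val with h | h
  · rw [show i.val + n - j.val = i.val - j.val + n by omega, Nat.add_mod_right,
      Nat.mod_eq_of_lt (a := i.val - j.val) (by omega),
      show i.val + n - (i.val - j.val) = j.val + n by omega,
      Nat.add_mod_right, Nat.mod_eq_of_lt hj]
  · rw [Nat.mod_eq_of_lt (a := i.val + n - j.val) (by omega),
      show i.val + n - (i.val + n - j.val) = j.val by omega, Nat.mod_eq_of_lt hj]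

theorem firstRight_mem (i : Fin n) (s : Finset (Fin n)) (h : s.Nonempty) :
    firstRight i s h ∈ s := by
  obtain ⟨j, hj, hdist⟩ := Finset.mem_image.1 (Finset.min'_mem (s.image (cdistR i)) (h.image _))
  rwa [firstRight, ← hdist, shiftR_cdistR]

theorem firstLeft_mem (i : Fin n) (s : Finset (Fin n)) (h : s.Nonempty) :
    firstLeft i s h ∈ s := by
  obtain ⟨j, hj, hdist⟩ := Finset.mem_image.1 (Finset.min'_mem (s.image (cdistL i)) (h.image _))
  rwa [firstLeft, ← hdist, shiftL_cdistL]

theorem cdistR_firstRight_le (i : Fin n) {s : Finset (Fin n)} (h : s.Nonempty) {j : Fin n}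
    (hj : j ∈ s) : cdistR i (firstRight i s h) ≤ cdistR i j := by
  obtain ⟨j₀, -, hdist⟩ :=
    Finset.mem_image.1 (Finset.min'_mem (s.image (cdistR i)) (h.image _))
  rw [firstRight, ← hdist, shiftR_cdistR, hdist]
  exact Finset.min'_le _ _ (Finset.mem_image_of_mem _ hj)

theorem isPlacement_step1 (u : Word n) (σ : Equiv.Perm (Fin n)) :
    IsPlacement (step1 u σ) (fun a => u (σ a) + 1) where
  exists_eq_of_nonempty st a h := ⟨_, firstLeft_mem (σ a) st.1 h, by rw [step1, dif_pos h]⟩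
  eq_of_not_nonempty st a h := by rw [step1, dif_neg h]

theorem isPlacement_step2 (u : Word n) (σ : Equiv.Perm (Fin n)) :
    IsPlacement (step2 u σ) (fun a => u (σ a)) where
  exists_eq_of_nonempty st a h := ⟨_, firstRight_mem (σ a) st.1 h, by rw [step2, dif_pos h]⟩
  eq_of_not_nonempty st a h := by rw [step2, dif_neg h]

end Cyclic

theorem val_lt_of_mem_take_finRange {m : ℕ} {a : Fin n} (ha : a ∈ (List.finRange n).take m) :
    a.val < m := by
  obtain ⟨i, hi, rfl⟩ := List.mem_take_iff_getElem.1 ha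
  simp only [List.length_finRange, lt_min_iff] at hi
  simpa using hi.1

theorem le_val_of_mem_drop_finRange {m : ℕ} {a : Fin n} (ha : a ∈ (List.finRange n).drop m) :
    m ≤ a.val := by
  obtain ⟨i, hi, rfl⟩ := List.mem_drop_iff_getElem.1 ha
  simp

section QueueAction

variable [NeZero n] (u : Word n) (σ : Equiv.Perm (Fin n)) (q : Finset (Fin n))

noncomputable def runPhaseTwo (m : ℕ) : Finset (Fin n) × Word n :=
  ((List.finRange n).take m).foldl (step2 u σ) (q, fun _ => 0)

/-- The site on which Phase II places the letter processed at time `a` (junk for `|q| ≤ a`). -/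
noncomputable def target (a : Fin n) : Fin n :=
  if h : (runPhaseTwo u σ q a).1.Nonempty then firstRight (σ a) (runPhaseTwo u σ q a).1 h else a

theorem runPhaseTwo_add (m d : ℕ) :
    runPhaseTwo u σ q (m + d) =
      (((List.finRange n).drop m).take d).foldl (step2 u σ) (runPhaseTwo u σ q m) := by
  rw [runPhaseTwo, List.take_add, List.foldl_append]
  rfl

theorem runPhaseTwo_succ (a : Fin n) :
    runPhaseTwo u σ q (a + 1) = step2 u σ (runPhaseTwo u σ q a) a := by
  rw [runPhaseTwo_add, List.drop_eq_getElem_cons (by simp), List.take_succ_cons, List.take_zero]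
  simp

theorem runPhaseTwo_fst_subset (m : ℕ) : (runPhaseTwo u σ q m).1 ⊆ q :=
  (isPlacement_step2 u σ).foldl_fst_subset _ _

theorem runPhaseTwo_fst_antitone {m m' : ℕ} (h : m ≤ m') :
    (runPhaseTwo u σ q m').1 ⊆ (runPhaseTwo u σ q m).1 := by
  obtain ⟨d, rfl⟩ := Nat.exists_eq_add_of_le h
  rw [runPhaseTwo_add]
  exact (isPlacement_step2 u σ).foldl_fst_subset _ _

theorem card_runPhaseTwo_fst {m : ℕ} (hm : m ≤ q.card) :
    (runPhaseTwo u σ q m).1.card = q.card - m := by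
  have hqn : q.card ≤ n := by simpa using q.card_le_univ
  rw [runPhaseTwo, (isPlacement_step2 u σ).card_foldl_fst _ _ (by simp; omega)]
  simp only [List.length_take, List.length_finRange]
  omega

theorem queueActWith_eq_foldl :
    queueActWith q σ u = (((List.finRange n).drop q.card).reverse.foldl (step1 u σ)
      (qᶜ, (runPhaseTwo u σ q q.card).2)).2 :=
  rfl

theorem queueActWith_apply_of_notMem_runPhaseTwo {m : ℕ} (hm : m ≤ q.card) {j : Fin n}
    (hjq : j ∈ q) (hj : j ∉ (runPhaseTwo u σ q m).1) :
    queueActWith q σ u j = (runPhaseTwo u σ q m).2 j := by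
  obtain ⟨d, hd⟩ := Nat.exists_eq_add_of_le hm
  rw [queueActWith_eq_foldl, (isPlacement_step1 u σ).foldl_snd_apply_of_notMem _ _
    (Finset.notMem_compl.2 hjq), hd, runPhaseTwo_add]
  exact (isPlacement_step2 u σ).foldl_snd_apply_of_notMem _ _ hj

theorem exists_queueActWith_eq_add_one {j : Fin n} (hj : j ∉ q) :
    ∃ a : Fin n, q.card ≤ a.val ∧ queueActWith q σ u j = u (σ a) + 1 := by
  set l := ((List.finRange n).drop q.card).reverse
  have hlen : l.length = qᶜ.card := by simp [l, Finset.card_compl]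
  have hempty : (l.foldl (step1 u σ) (qᶜ, (runPhaseTwo u σ q q.card).2)).1 = ∅ :=
    Finset.card_eq_zero.1 (by rw [(isPlacement_step1 u σ).card_foldl_fst _ _ hlen.le, hlen,
      Nat.sub_self])
  obtain ⟨a, ha, hval⟩ := (isPlacement_step1 u σ).exists_foldl_snd_apply_eq l _
    (Finset.mem_compl.2 hj) (by rw [hempty]; exact Finset.notMem_empty j)
  exact ⟨a, le_val_of_mem_drop_finRange (List.mem_reverse.1 ha), hval⟩

variable {a : Fin n} (ha : a.val < q.card)
include ha

theorem runPhaseTwo_fst_nonempty : (runPhaseTwo u σ q a).1.Nonempty :=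
  Finset.card_pos.1 (by rw [card_runPhaseTwo_fst u σ q ha.le]; omega)

theorem target_eq :
    target u σ q a = firstRight (σ a) _ (runPhaseTwo_fst_nonempty u σ q ha) :=
  dif_pos _

theorem target_mem_runPhaseTwo : target u σ q a ∈ (runPhaseTwo u σ q a).1 := by
  rw [target_eq u σ q ha]
  exact firstRight_mem _ _ _

theorem target_mem : target u σ q a ∈ q :=
  runPhaseTwo_fst_subset u σ q a (target_mem_runPhaseTwo u σ q ha)

theorem runPhaseTwo_succ_eq : runPhaseTwo u σ q (a + 1) =
    ((runPhaseTwo u σ q a).1.erase (target u σ q a),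
      Function.update (runPhaseTwo u σ q a).2 (target u σ q a) (u (σ a))) := by
  rw [runPhaseTwo_succ, step2, dif_pos (runPhaseTwo_fst_nonempty u σ q ha), target_eq u σ q ha]

theorem target_notMem_runPhaseTwo {m : ℕ} (hm : a.val < m) :
    target u σ q a ∉ (runPhaseTwo u σ q m).1 := fun h => by
  have := runPhaseTwo_fst_antitone u σ q hm h
  rw [runPhaseTwo_succ_eq u σ q ha] at this
  exact Finset.notMem_erase _ _ this

theorem queueActWith_target : queueActWith q σ u (target u σ q a) = u (σ a) := by
  rw [queueActWith_apply_of_notMem_runPhaseTwo u σ q (m := a + 1) ha (target_mem u σ q ha)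
    (target_notMem_runPhaseTwo u σ q ha (Nat.lt_succ_self _)), runPhaseTwo_succ_eq u σ q ha]
  exact Function.update_self _ _ _

theorem cdistR_target_le {j : Fin n} (hj : j ∈ (runPhaseTwo u σ q a).1) :
    cdistR (σ a) (target u σ q a) ≤ cdistR (σ a) j := by
  rw [target_eq u σ q ha]
  exact cdistR_firstRight_le _ _ hj

theorem mem_runPhaseTwo_of_lt (hσ : IsSorting u σ) {j : Fin n} (hj : j ∈ q)
    (hlt : u (σ a) < queueActWith q σ u j) : j ∈ (runPhaseTwo u σ q a).1 := by
  by_contra hfree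
  obtain ⟨b, hb, hval⟩ :=
    (isPlacement_step2 u σ).exists_foldl_snd_apply_eq _ (q, fun _ => 0) hj hfree
  have hval : (runPhaseTwo u σ q a).2 j = u (σ b) := hval
  rw [queueActWith_apply_of_notMem_runPhaseTwo u σ q ha.le hj hfree, hval] at hlt
  have hba : b ≤ a := Fin.le_def.2 (val_lt_of_mem_take_finRange hb).le
  exact absurd (hσ hba) (not_le.2 hlt)

omit ha

theorem target_injOn : Set.InjOn (target u σ q) {a | a.val < q.card} := by
  intro a ha b hb hab
  by_contra hne
  wlog hlt : a < b generalizing a b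
  · exact this hb ha hab.symm (Ne.symm hne) (lt_of_le_of_ne (not_lt.1 hlt) (Ne.symm hne))
  exact target_notMem_runPhaseTwo u σ q ha hlt (hab ▸ target_mem_runPhaseTwo u σ q hb)

theorem exists_target_eq {j : Fin n} (hj : j ∈ q) :
    ∃ a : Fin n, a.val < q.card ∧ target u σ q a = j := by
  have hqn : q.card ≤ n := by simpa using q.card_le_univ
  obtain ⟨a, ha, rfl⟩ :=
    Finset.surjOn_of_injOn_of_card_le (s := Finset.univ.filter (·.val < q.card))
    (target u σ q) (fun a ha => target_mem u σ q (Finset.mem_filter.1 ha).2)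
    (fun a ha b hb => target_injOn u σ q (Finset.mem_filter.1 ha).2 (Finset.mem_filter.1 hb).2)
    (by rw [Fin.card_filter_val_lt]; omega) hj
  exact ⟨a, (Finset.mem_filter.1 ha).2, rfl⟩

end QueueAction

theorem dom_level_of_bijOn {u w : Word n} {h h' : ℕ} {f : Fin n → Fin n}
    (hf : Set.BijOn f {i | u i = h} {j | w j = h'}) (hle : ∀ i, u i = h → i ≤ f i) :
    Dom (level w h') (level u h) := by
  have hf' :
      Set.BijOn f ↑(Finset.univ.filter (u · = h)) ↑(Finset.univ.filter (w · = h')) := by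
    simpa only [Finset.coe_filter, Finset.mem_univ, true_and] using hf
  apply dom_of_card_filter_le
  · rw [level, level, Finset.card_image_of_injective _ Fin.val_injective,
      Finset.card_image_of_injective _ Fin.val_injective, hf'.finsetCard_eq]
  · intro m
    rw [level, level, Finset.filter_image, Finset.filter_image,
      Finset.card_image_of_injective _ Fin.val_injective,
      Finset.card_image_of_injective _ Fin.val_injective]
    refine Finset.card_le_card_of_injOn f (fun i hi => ?_)
      (hf'.injOn.mono fun i hi => (Finset.mem_filter.1 hi).1)
    obtain ⟨hi, hmi⟩ := Finset.mem_filter.1 hi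
    exact Finset.mem_filter.2 ⟨hf'.mapsTo hi, le_trans hmi (hle i (Finset.mem_filter.1 hi).2)⟩

section Interlacing

variable [NeZero n] {u : Word n} {σ : Equiv.Perm (Fin n)} {q : Finset (Fin n)} {t : ℕ}
  (hσ : IsSorting u σ)
  (h3 : (Finset.univ.filter (fun p => queueActWith q σ u p ≤ t)).card = q.card)
include hσ h3

theorem le_of_val_lt_card {a : Fin n} (ha : a.val < q.card) : u (σ a) ≤ t := by
  by_contra! hgt
  have hsub : Finset.univ.filter (fun p => queueActWith q σ u p ≤ t) ⊆
      q.erase (target u σ q a) := by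
    intro j hj
    have hjt := (Finset.mem_filter.1 hj).2
    have hjq : j ∈ q := by
      by_contra hjq
      obtain ⟨b, hb, hval⟩ := exists_queueActWith_eq_add_one u σ q hjq
      have : u (σ a) ≤ u (σ b) := hσ (Fin.le_def.2 (by omega))
      omega
    refine Finset.mem_erase.2 ⟨?_, hjq⟩
    rintro rfl
    rw [queueActWith_target u σ q ha] at hjt
    omega
  have := Finset.card_le_card hsub
  rw [h3, Finset.card_erase_of_mem (target_mem u σ q ha)] at this
  omega

theorem le_of_card_le_val (h1 : ∃ p, queueActWith q σ u p = t) {a : Fin n}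
    (ha : q.card ≤ a.val) : t ≤ u (σ a) := by
  by_contra! hlt
  have hq : ∀ j ∈ q, queueActWith q σ u j < t := fun j hj => by
    obtain ⟨b, hb, rfl⟩ := exists_target_eq u σ q hj
    rw [queueActWith_target u σ q hb]
    exact lt_of_le_of_lt (hσ (Fin.le_def.2 (by omega))) hlt
  obtain ⟨p, hp⟩ := h1
  have hsub : insert p q ⊆ Finset.univ.filter (fun p => queueActWith q σ u p ≤ t) := by
    intro j hj
    rcases Finset.mem_insert.1 hj with rfl | hj
    · exact Finset.mem_filter.2 ⟨Finset.mem_univ _, hp.le⟩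
    · exact Finset.mem_filter.2 ⟨Finset.mem_univ _, (hq j hj).le⟩
  have := Finset.card_le_card hsub
  rw [h3, Finset.card_insert_of_notMem fun hpq => (hq p hpq).ne hp] at this
  omega

variable (h1 : ∃ p, queueActWith q σ u p = t)
include h1

theorem mem_iff_queueActWith_le {j : Fin n} : j ∈ q ↔ queueActWith q σ u j ≤ t := by
  constructor
  · intro hj
    obtain ⟨a, ha, rfl⟩ := exists_target_eq u σ q hj
    rw [queueActWith_target u σ q ha]
    exact le_of_val_lt_card hσ h3 ha
  · intro hj
    by_contra hjq
    obtain ⟨a, ha, hval⟩ := exists_queueActWith_eq_add_one u σ q hjq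
    have := le_of_card_le_val hσ h3 h1 ha
    omega

theorem val_symm_lt_card {i : Fin n} (hi : u i < t) : (σ.symm i).val < q.card := by
  by_contra! ha
  have := le_of_card_le_val hσ h3 h1 ha
  rw [Equiv.apply_symm_apply] at this
  omega

theorem bijOn_target_symm {h : ℕ} (hh : h < t) :
    Set.BijOn (fun i => target u σ q (σ.symm i)) {i | u i = h}
      {j | queueActWith q σ u j = h} := by
  refine ⟨fun i hi => ?_, fun i hi i' hi' he => ?_, fun j hj => ?_⟩
  · have hi : u i = h := hi
    show queueActWith q σ u (target u σ q (σ.symm i)) = h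
    rw [queueActWith_target u σ q (val_symm_lt_card hσ h3 h1 (hi ▸ hh)),
      Equiv.apply_symm_apply, hi]
  · have hi : u i = h := hi
    have hi' : u i' = h := hi'
    exact σ.symm.injective (target_injOn u σ q (val_symm_lt_card hσ h3 h1 (hi ▸ hh))
      (val_symm_lt_card hσ h3 h1 (hi' ▸ hh)) he)
  · have hj : queueActWith q σ u j = h := hj
    obtain ⟨a, ha, rfl⟩ :=
      exists_target_eq u σ q ((mem_iff_queueActWith_le hσ h3 h1).2 (hj ▸ hh.le))
    refine ⟨σ a, ?_, by simp⟩
    show u (σ a) = h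
    rw [← queueActWith_target u σ q ha, hj]

theorem exists_queueActWith_min'_eq (h2 : WDUpTo t (queueActWith q σ u)) :
    ∃ hq : q.Nonempty, queueActWith q σ u (q.min' hq) = t := by
  obtain ⟨p, hp⟩ := h1
  have hpq : p ∈ q := (mem_iff_queueActWith_le hσ h3 ⟨p, hp⟩).2 hp.le
  refine ⟨⟨p, hpq⟩,
    le_antisymm ((mem_iff_queueActWith_le hσ h3 ⟨p, hp⟩).1 (q.min'_mem _)) ?_⟩
  rcases (q.min'_le p hpq).lt_or_eq with hlt | heq
  · exact hp ▸ h2 _ _ hlt hp.le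
  · rw [heq, hp]

/-- The leftmost queue site receives `t`, so it is still free when a letter below `t` is
placed; hence that letter does not wrap around the end of the word. -/
theorem le_target_symm (h2 : WDUpTo t (queueActWith q σ u)) {i : Fin n} (hi : u i < t) :
    i ≤ target u σ q (σ.symm i) := by
  have ha := val_symm_lt_card hσ h3 h1 hi
  obtain ⟨hq, hmin⟩ := exists_queueActWith_min'_eq hσ h3 h1 h2
  have hfree : q.min' hq ∈ (runPhaseTwo u σ q (σ.symm i)).1 :=
    mem_runPhaseTwo_of_lt u σ q ha hσ (q.min'_mem hq) (by rwa [hmin, Equiv.apply_symm_apply])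
  have hdist := cdistR_target_le u σ q ha hfree
  rw [Equiv.apply_symm_apply] at hdist
  by_contra! hlt
  have hmin_le := q.min'_le _ (target_mem u σ q ha)
  rw [cdistR_of_lt hlt, cdistR_of_lt (lt_of_le_of_lt hmin_le hlt)] at hdist
  have heq : target u σ q (σ.symm i) = q.min' hq := le_antisymm (Fin.le_def.2 (by omega)) hmin_le
  have hval := queueActWith_target u σ q ha
  rw [heq, hmin, Equiv.apply_symm_apply] at hval
  omega

theorem lt_of_queueActWith_eq_add_one (h2 : WDUpTo t (queueActWith q σ u)) {h : ℕ}
    (hht : h + 1 ≤ t) {i j : Fin n} (hi : u i = h) (hj : queueActWith q σ u j = h + 1) :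
    j < i := by
  have ha := val_symm_lt_card hσ h3 h1 (by omega : u i < t)
  have hfree : j ∈ (runPhaseTwo u σ q (σ.symm i)).1 :=
    mem_runPhaseTwo_of_lt u σ q ha hσ ((mem_iff_queueActWith_le hσ h3 h1).2 (hj ▸ hht))
      (by rw [Equiv.apply_symm_apply]; omega)
  have hdist := cdistR_target_le u σ q ha hfree
  have hval := queueActWith_target u σ q ha
  rw [Equiv.apply_symm_apply] at hdist hval
  set L := target u σ q (σ.symm i)
  by_contra! hij
  rw [cdistR_of_le hij] at hdist
  rcases le_or_gt i L with hiL | hLi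
  · rw [cdistR_of_le hiL] at hdist
    rcases (Fin.le_def.2 (by omega) : L ≤ j).lt_or_eq with hLj | rfl
    · have := h2 L j hLj (by omega)
      omega
    · omega
  · rw [cdistR_of_lt hLi] at hdist
    omega

end Interlacing

theorem queue_act_interlace_general {n t : ℕ} [NeZero n] (u : Word n)
    (q : Finset (Fin n))
    (h1 : ∃ p, act q u p = t)
    (h2 : WDUpTo t (act q u))
    (h3 : (Finset.univ.filter (fun p => act q u p ≤ t)).card = q.card) :
    ∀ h, 1 ≤ h → h ≤ t - 1 →
      Dom (level (act q u) h) (level u h) ∧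
      Gg (level u h) (level (act q u) (h + 1)) := by
  intro h _ hht
  have hσ : IsSorting u (Tuple.sort u) := Tuple.monotone_sort u
  refine ⟨dom_level_of_bijOn (bijOn_target_symm hσ h3 h1 (show h < t by omega))
    fun i (hi : u i = h) => le_target_symm hσ h3 h1 h2 (by omega), ?_⟩
  intro _ hi _ hj
  obtain ⟨i, hui, rfl⟩ := Finset.mem_image.1 hi
  obtain ⟨j, hwj, rfl⟩ := Finset.mem_image.1 hj
  exact lt_of_queueActWith_eq_add_one hσ h3 h1 h2 (show h + 1 ≤ t by omega)
    (Finset.mem_filter.1 hui).2 (Finset.mem_filter.1 hwj).2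

/-- If `q(u)` has at least one letter equal to `t`, is weakly decreasing up to level `t`,
and has exactly `|q|` letters at most `t`, then for each `1 ≤ h ≤ t - 1` one has
`{p : q(u)_p = h} ⪰ {p : u_p = h} ≫ {p : q(u)_p = h + 1}`. -/
theorem queue_act_interlace {n t : ℕ} [NeZero n] (ht : 0 < t) (u : Word n)
    (q : Finset (Fin n))
    (h1 : ∃ p, act q u p = t)
    (h2 : WDUpTo t (act q u))
    (h3 : (Finset.univ.filter (fun p => act q u p ≤ t)).card = q.card) :
    ∀ h, 1 ≤ h → h ≤ t - 1 →
      Dom (level (act q u) h) (level u h) ∧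
      Gg (level u h) (level (act q u) (h + 1)) :=
  queue_act_interlace_general u q h1 h2 h3

end MLQ
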